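/- With the coloring of Lemma on the even-diameter product T □ T' (red = distance diam(T□T') from v_{j,k}, blue = distance diam(T□T') − 1 from v_{1,1}, green otherwise, under the hypotheses that T, T', T_{u₁⁻}, T'_{w₁⁻} are non-3-peripheral and v_{1,1}, v_{j,k} realize diam(T□T')): if c(x) = red and c(y) = blue, then d(x,y) = diam(T □ T') − 1. -/

import Mathlib

open SimpleGraph Walk

section TreeLemmas

variable {V : Type*} {G : SimpleGraph V}

/-- In a tree, every path between two vertices has length equal to the distance. -/
lemma tree_path_length (hG : G.IsTree) {a b : V} {W : G.Walk a b} (hW : W.IsPath) :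
    W.length = G.dist a b := by
  obtain ⟨S, hS, hSl⟩ := hG.isConnected.exists_path_of_dist a b
  have := hG.IsAcyclic.path_unique ⟨W, hW⟩ ⟨S, hS⟩
  rw [← hSl]
  exact congrArg (fun p : G.Path a b => p.1.length) this

lemma dist_split' (hc : G.Connected) {a b : V} {W : G.Walk a b}
    (hl : W.length = G.dist a b) {v : V} (hv : v ∈ W.support) [DecidableEq V] :
    (W.takeUntil v hv).length = G.dist a v ∧ (W.dropUntil v hv).length = G.dist v b := by
  have h1 : G.dist a v ≤ (W.takeUntil v hv).length := G.dist_le _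
  have h2 : G.dist v b ≤ (W.dropUntil v hv).length := G.dist_le _
  have h3 : (W.takeUntil v hv).length + (W.dropUntil v hv).length = W.length := by
    have := congrArg Walk.length (W.take_spec hv)
    rwa [Walk.length_append] at this
  have h4 := hc.dist_triangle (u := a) (v := v) (w := b)
  omega

/-- Splitting a shortest walk at a support vertex. -/
lemma dist_split (hc : G.Connected) {a b : V} {W : G.Walk a b}
    (hl : W.length = G.dist a b) {v : V} (hv : v ∈ W.support) :
    G.dist a v + G.dist v b = G.dist a b := by
  classical
  have h := dist_split' hc hl hv
  have h4 := hc.dist_triangle (u := a) (v := v) (w := b)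
  have h3 : (W.takeUntil v hv).length + (W.dropUntil v hv).length = W.length := by
    have := congrArg Walk.length (W.take_spec hv)
    rwa [Walk.length_append] at this
  omega

/-- On a shortest walk, distances between support vertices are differences of
distances to the start. -/
lemma dist_between (hc : G.Connected) {a b : V} {W : G.Walk a b}
    (hl : W.length = G.dist a b) {u v : V} (hu : u ∈ W.support) (hv : v ∈ W.support)
    (hle : G.dist a u ≤ G.dist a v) :
    G.dist a u + G.dist u v = G.dist a v := by
  classical
  obtain ⟨htl, hdl⟩ := dist_split' hc hl hu
  have hsu := dist_split hc hl hu
  have hsv := dist_split hc hl hv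
  have hv' : v ∈ (W.takeUntil u hu).support ∨ v ∈ (W.dropUntil u hu).support := by
    have := W.take_spec hu
    rw [← this] at hv
    exact (Walk.mem_support_append_iff _ _).mp hv
  rcases hv' with hv' | hv'
  · have := dist_split hc htl hv'
    have h0 : G.dist v u = 0 := by omega
    have h0' : G.dist u v = 0 := by rwa [G.dist_comm]
    have : u = v := hc.dist_eq_zero_iff.mp h0'
    subst this
    simp
  · have hdrop : G.dist u v + G.dist v b = G.dist u b := dist_split hc hdl hv'
    have h4 := hc.dist_triangle (u := a) (v := v) (w := b)
    omega

/-- Appending two paths whose supports only share the middle vertex gives a path. -/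
lemma isPath_append' {a m b : V} {p : G.Walk a m} {q : G.Walk m b}
    (hp : p.IsPath) (hq : q.IsPath)
    (hdisj : ∀ v ∈ p.support, v ∈ q.support → v = m) : (p.append q).IsPath := by
  rw [Walk.isPath_def, Walk.support_append]
  have hq' : q.support = m :: q.support.tail := q.support_eq_cons
  have hqn : q.support.Nodup := hq.support_nodup
  rw [hq'] at hqn
  have hmt : m ∉ q.support.tail := (List.nodup_cons.mp hqn).1
  have htn : q.support.tail.Nodup := (List.nodup_cons.mp hqn).2
  refine List.Nodup.append hp.support_nodup htn ?_
  intro v hvp hvq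
  have hvq' : v ∈ q.support := by rw [hq']; exact List.mem_cons_of_mem _ hvq
  have := hdisj v hvp hvq'
  subst this
  exact hmt hvq

lemma exists_first_meet {x y : V} (Q : G.Walk x y) (s : List V) (hy : y ∈ s) :
    ∃ (m : V) (_hm : m ∈ s) (R : G.Walk x m),
      R.length ≤ Q.length ∧ ∀ v ∈ R.support, v ∈ s → v = m := by
  induction Q with
  | nil =>
    exact ⟨_, hy, Walk.nil, le_refl _, fun v hv _ => by simpa using hv⟩
  | @cons a c d h Q' ih =>
    by_cases hx : a ∈ s
    · exact ⟨a, hx, Walk.nil, Nat.zero_le _, fun v hv _ => by simpa using hv⟩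
    · obtain ⟨m, hm, R, hRl, hRd⟩ := ih hy
      refine ⟨m, hm, Walk.cons h R, by simp [Nat.add_le_add_right hRl 1], ?_⟩
      intro v hv hvP
      rcases List.mem_cons.mp ((Walk.support_cons h R) ▸ hv) with rfl | hv''
      · exact absurd hvP hx
      · exact hRd v hv'' hvP

/-- Projection of a vertex `x` onto a path `P` from `p` to `q` in a tree. -/
lemma exists_proj (hG : G.IsTree) {p q : V} (P : G.Walk p q) (hP : P.IsPath) (x : V) :
    ∃ m ∈ P.support, G.dist p m + G.dist m x = G.dist p x ∧
      G.dist x m + G.dist m q = G.dist x q ∧ G.dist p m + G.dist m q = G.dist p q := by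
  classical
  have hc := hG.isConnected
  obtain ⟨Q, hQ, hQl⟩ := hc.exists_path_of_dist x p
  obtain ⟨m, hm, R, hRl, hRd⟩ := exists_first_meet Q P.support P.start_mem_support
  have hR'p : R.bypass.IsPath := R.bypass_isPath
  have hR'l : R.bypass.length ≤ G.dist x p :=
    le_trans (le_trans R.length_bypass_le hRl) (le_of_eq hQl)
  have hR'd : ∀ v ∈ R.bypass.support, v ∈ P.support → v = m := fun v hv =>
    hRd v (R.support_bypass_subset hv)
  have hT : (P.takeUntil m hm).IsPath := hP.takeUntil hm
  have hD : (P.dropUntil m hm).IsPath := hP.dropUntil hm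
  have hW₂ : (R.bypass.append (P.takeUntil m hm).reverse).IsPath := by
    refine isPath_append' hR'p hT.reverse ?_
    intro v hv hv'
    exact hR'd v hv (P.support_takeUntil_subset hm
      (by rwa [Walk.support_reverse, List.mem_reverse] at hv'))
  have hW₁ : (R.bypass.append (P.dropUntil m hm)).IsPath := by
    refine isPath_append' hR'p hD ?_
    intro v hv hv'
    exact hR'd v hv (P.support_dropUntil_subset hm hv')
  have e2 : R.bypass.length + (P.takeUntil m hm).length = G.dist x p := by
    have := tree_path_length hG hW₂
    rwa [Walk.length_append, Walk.length_reverse] at this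
  have e1 : R.bypass.length + (P.dropUntil m hm).length = G.dist x q := by
    have := tree_path_length hG hW₁
    rwa [Walk.length_append] at this
  have eP : (P.takeUntil m hm).length + (P.dropUntil m hm).length = G.dist p q := by
    have h := congrArg Walk.length (P.take_spec hm)
    rw [Walk.length_append] at h
    rw [h]
    exact tree_path_length hG hP
  have d1 : G.dist x m ≤ R.bypass.length := G.dist_le _
  have d2 : G.dist m p ≤ (P.takeUntil m hm).length := by
    have := G.dist_le (P.takeUntil m hm).reverse
    rwa [Walk.length_reverse] at this
  have d3 : G.dist m q ≤ (P.dropUntil m hm).length := G.dist_le _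
  have t1 := hc.dist_triangle (u := x) (v := m) (w := p)
  have t2 := hc.dist_triangle (u := x) (v := m) (w := q)
  have c1 : G.dist p m = G.dist m p := G.dist_comm
  have c2 : G.dist m x = G.dist x m := G.dist_comm
  have c3 : G.dist x p = G.dist p x := G.dist_comm
  exact ⟨m, hm, by omega, by omega, by omega⟩

/-- The four-point condition in a tree. -/
lemma four_point (hG : G.IsTree) (x y p q : V) :
    G.dist x y + G.dist p q ≤
      max (G.dist x p + G.dist y q) (G.dist x q + G.dist y p) := by
  have hc := hG.isConnected
  obtain ⟨P, hP, hPl⟩ := hc.exists_path_of_dist p q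
  obtain ⟨m, hm, hm1, hm2, hm3⟩ := exists_proj hG P hP x
  obtain ⟨n, hn, hn1, hn2, hn3⟩ := exists_proj hG P hP y
  have t1 := hc.dist_triangle (u := x) (v := m) (w := y)
  have t2 := hc.dist_triangle (u := m) (v := n) (w := y)
  have t3 := hc.dist_triangle (u := x) (v := n) (w := y)
  have t4 := hc.dist_triangle (u := x) (v := m) (w := n)
  have c1 : G.dist y p = G.dist p y := G.dist_comm
  have c2 : G.dist m n = G.dist n m := G.dist_comm
  have c3 : G.dist m x = G.dist x m := G.dist_comm
  have c4 : G.dist y n = G.dist n y := G.dist_comm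
  have c5 : G.dist x p = G.dist p x := G.dist_comm
  have c7 : G.dist n x = G.dist x n := G.dist_comm
  have c8 : G.dist y m = G.dist m y := G.dist_comm
  rcases le_or_gt (G.dist p m) (G.dist p n) with hle | hlt
  · have hb := dist_between hc hPl hm hn hle
    exact le_max_of_le_right (by omega)
  · have hb := dist_between hc hPl hn hm (le_of_lt hlt)
    exact le_max_of_le_left (by omega)

/-- In a tree, an edge changes the distance to any fixed vertex by exactly one. -/
lemma adj_dist (hG : G.IsTree) (p : V) {u v : V} (h : G.Adj u v) :
    G.dist p v = G.dist p u + 1 ∨ G.dist p u = G.dist p v + 1 := by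
  have hc := hG.isConnected
  have huv : G.dist u v = 1 := SimpleGraph.dist_eq_one_iff_adj.mpr h
  have hvu : G.dist v u = 1 := SimpleGraph.dist_eq_one_iff_adj.mpr h.symm
  have t1 := hc.dist_triangle (u := p) (v := u) (w := v)
  have t2 := hc.dist_triangle (u := p) (v := v) (w := u)
  have hne : G.dist p u ≠ G.dist p v := by
    intro heq
    obtain ⟨Q, hQ, hQl⟩ := hc.exists_path_of_dist p u
    by_cases hvQ : v ∈ Q.support
    · have := dist_split hc hQl hvQ
      omega
    · have hQ' : (Q.concat h).IsPath := by
        rw [← Walk.isPath_reverse_iff, Walk.reverse_concat]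
        rw [Walk.cons_isPath_iff, Walk.isPath_reverse_iff]
        exact ⟨hQ, by rwa [Walk.support_reverse, List.mem_reverse]⟩
      have := tree_path_length hG hQ'
      rw [Walk.length_concat, hQl] at this
      omega
  omega

/-- Parity of distances along a walk in a tree. -/
lemma walk_parity (hG : G.IsTree) (p : V) {x y : V} (W : G.Walk x y) :
    (G.dist p x + W.length) % 2 = G.dist p y % 2 := by
  induction W with
  | nil => simp
  | @cons a c d h W' ih =>
    have := adj_dist hG p h
    rw [Walk.length_cons]
    omega

/-- Distance parity in trees: `d(p,x) + d(x,y)` has the same parity as `d(p,y)`. -/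
lemma dist_parity (hG : G.IsTree) (p x y : V) :
    (G.dist p x + G.dist x y) % 2 = G.dist p y % 2 := by
  obtain ⟨W, hWl⟩ := (hG.isConnected x y).exists_walk_length_eq_dist
  rw [← hWl]
  exact walk_parity hG p W

lemma concat_isPath {a u v : V} {p : G.Walk a u} (hp : p.IsPath) (h : G.Adj u v)
    (hv : v ∉ p.support) : (p.concat h).IsPath := by
  rw [← Walk.isPath_reverse_iff, Walk.reverse_concat, Walk.cons_isPath_iff,
    Walk.isPath_reverse_iff]
  exact ⟨hp, by rwa [Walk.support_reverse, List.mem_reverse]⟩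

/-- An internal vertex of a path has two distinct neighbors. -/
lemma internal_two_nbrs {a b v : V} {W : G.Walk a b} (hW : W.IsPath)
    (hv : v ∈ W.support) (hva : v ≠ a) (hvb : v ≠ b) :
    ∃ u u', G.Adj v u ∧ G.Adj v u' ∧ u ≠ u' := by
  classical
  have hsp := W.take_spec hv
  have hTnil : ¬ (W.takeUntil v hv).reverse.Nil := Walk.not_nil_of_ne hva
  have hDnil : ¬ (W.dropUntil v hv).Nil := Walk.not_nil_of_ne hvb
  obtain ⟨u', h', D', hD'⟩ := Walk.not_nil_iff.mp hDnil
  obtain ⟨u, h, T', hT'⟩ := Walk.not_nil_iff.mp hTnil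
  refine ⟨u, u', h, h', ?_⟩
  have hnodup : (W.takeUntil v hv).support.Disjoint ((W.dropUntil v hv).support.tail) := by
    have := hW.support_nodup
    rw [← hsp, Walk.support_append] at this
    exact (List.nodup_append'.mp this).2.2
  have hu : u ∈ (W.takeUntil v hv).support := by
    have : u ∈ (W.takeUntil v hv).reverse.support := by
      rw [hT']
      simp
    rwa [Walk.support_reverse, List.mem_reverse] at this
  have hu' : u' ∈ (W.dropUntil v hv).support.tail := by
    rw [hD']
    simp
  exact fun heq => hnodup hu (heq ▸ hu')

lemma ediam_ne_top_of_connected {V : Type*} [Finite V] [Nonempty V] {G : SimpleGraph V}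
    (hc : G.Connected) : G.ediam ≠ ⊤ := by
  obtain ⟨u, v, huv⟩ := G.exists_edist_eq_ediam_of_finite
  rw [← huv]
  exact SimpleGraph.edist_ne_top_iff_reachable.mpr (hc u v)

section FiniteTree

variable [Finite V] [Nonempty V]

lemma periph_nbr (hG : G.IsTree) {p v : V} (hv : G.dist p v = G.diam)
    {u : V} (h : G.Adj v u) : G.dist p u + 1 = G.dist p v := by
  have hle : G.dist p u ≤ G.diam :=
    G.dist_le_diam (ediam_ne_top_of_connected hG.isConnected)
  rcases adj_dist hG p h with h1 | h1 <;> omega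

lemma periph_unique_nbr (hG : G.IsTree) {p v : V} (hv : G.dist p v = G.diam)
    {u u' : V} (hu : G.Adj v u) (hu' : G.Adj v u') : u = u' := by
  have hc := hG.isConnected
  have hdu : G.dist p u + 1 = G.dist p v := periph_nbr hG hv hu
  have hdu' : G.dist p u' + 1 = G.dist p v := periph_nbr hG hv hu'
  obtain ⟨Q, hQ, hQl⟩ := hc.exists_path_of_dist p u
  obtain ⟨Q', hQ', hQl'⟩ := hc.exists_path_of_dist p u'
  have hvQ : v ∉ Q.support := fun hvq => by
    have := dist_split hc hQl hvq
    have hvu : G.dist v u ≠ 0 := by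
      rw [SimpleGraph.dist_ne_zero_iff_ne_and_reachable]
      exact ⟨hu.ne, hc v u⟩
    omega
  have hvQ' : v ∉ Q'.support := fun hvq => by
    have := dist_split hc hQl' hvq
    have hvu : G.dist v u' ≠ 0 := by
      rw [SimpleGraph.dist_ne_zero_iff_ne_and_reachable]
      exact ⟨hu'.ne, hc v u'⟩
    omega
  have hP1 : (Q.concat hu.symm).IsPath := concat_isPath hQ hu.symm hvQ
  have hP2 : (Q'.concat hu'.symm).IsPath := concat_isPath hQ' hu'.symm hvQ'
  have := hG.IsAcyclic.path_unique ⟨Q.concat hu.symm, hP1⟩ ⟨Q'.concat hu'.symm, hP2⟩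
  have heq : Q.concat hu.symm = Q'.concat hu'.symm := congrArg Subtype.val this
  obtain ⟨huu', -⟩ := Walk.concat_inj heq
  exact huu'

end FiniteTree

lemma induce_walk_of_support (S : Set V) {a b : V} (W : G.Walk a b)
    (hS : ∀ v ∈ W.support, v ∈ S) :
    ∃ W' : (G.induce S).Walk ⟨a, hS a W.start_mem_support⟩ ⟨b, hS b W.end_mem_support⟩,
      W'.length = W.length := by
  induction W with
  | nil => exact ⟨Walk.nil, rfl⟩
  | @cons a c d h W' ih =>
    have hS' : ∀ v ∈ W'.support, v ∈ S := fun v hv =>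
      hS v (by rw [Walk.support_cons]; exact List.mem_cons_of_mem _ hv)
    obtain ⟨W'', hW''⟩ := ih hS'
    exact ⟨Walk.cons (by simpa using h) W'', by simpa using hW''⟩

section Induced

variable [Finite V] [Nonempty V]

/-- Distances are preserved in the subtree obtained by deleting the vertices at
distance `diam` from `p`. -/
lemma induce_dist_eq (hG : G.IsTree) (p : V)
    {a b : V} (ha : a ∈ {v : V | G.dist p v < G.diam})
    (hb : b ∈ {v : V | G.dist p v < G.diam}) :
    (G.induce {v : V | G.dist p v < G.diam}).dist ⟨a, ha⟩ ⟨b, hb⟩ = G.dist a b := by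
  have hc := hG.isConnected
  set S := {v : V | G.dist p v < G.diam} with hSdef
  obtain ⟨W, hW, hWl⟩ := hc.exists_path_of_dist a b
  have hsupp : ∀ v ∈ W.support, v ∈ S := by
    intro v hv
    by_contra hvS
    have hvd : G.dist p v = G.diam := by
      have := G.dist_le_diam (ediam_ne_top_of_connected hc) (u := p) (v := v)
      simp only [hSdef, Set.mem_setOf_eq, not_lt] at hvS
      omega
    have hva : v ≠ a := fun hh => hvS (hh ▸ ha)
    have hvb : v ≠ b := fun hh => hvS (hh ▸ hb)
    obtain ⟨u, u', hu, hu', huu'⟩ := internal_two_nbrs hW hv hva hvb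
    exact huu' (periph_unique_nbr hG hvd hu hu')
  obtain ⟨W', hW'l⟩ := induce_walk_of_support S W hsupp
  refine le_antisymm (by rw [← hWl, ← hW'l]; exact SimpleGraph.dist_le W') ?_
  have hreach : (G.induce S).Reachable ⟨a, ha⟩ ⟨b, hb⟩ := ⟨W'⟩
  obtain ⟨W₀, hW₀⟩ := hreach.exists_walk_length_eq_dist
  have := SimpleGraph.dist_le (W₀.map (SimpleGraph.Embedding.induce S).toHom)
  rwa [Walk.length_map, hW₀] at this

lemma induce_connected (hG : G.IsTree) (p : V) (hd : G.diam ≠ 0) :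
    (G.induce {v : V | G.dist p v < G.diam}).Connected := by
  have hc := hG.isConnected
  set S := {v : V | G.dist p v < G.diam} with hSdef
  have hp : p ∈ S := by
    have : G.dist p p = 0 := by simp
    simp only [hSdef, Set.mem_setOf_eq, this]
    exact Nat.pos_of_ne_zero hd
  rw [SimpleGraph.connected_iff]
  constructor
  · intro a b
    obtain ⟨W, hW, hWl⟩ := hc.exists_path_of_dist a.1 b.1
    have hsupp : ∀ v ∈ W.support, v ∈ S := by
      intro v hv
      by_contra hvS
      have hvd : G.dist p v = G.diam := by
        have := G.dist_le_diam (ediam_ne_top_of_connected hc) (u := p) (v := v)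
        simp only [hSdef, Set.mem_setOf_eq, not_lt] at hvS
        omega
      have hva : v ≠ a.1 := fun hh => hvS (hh ▸ a.2)
      have hvb : v ≠ b.1 := fun hh => hvS (hh ▸ b.2)
      obtain ⟨u, u', hu, hu', huu'⟩ := internal_two_nbrs hW hv hva hvb
      exact huu' (periph_unique_nbr hG hvd hu hu')
    obtain ⟨W', -⟩ := induce_walk_of_support S W hsupp
    exact ⟨W'.copy (Subtype.ext rfl) (Subtype.ext rfl)⟩
  · exact ⟨⟨p, hp⟩⟩

lemma exists_prenbr (hG : G.IsTree) {p q : V} (h : G.dist p q = G.diam)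
    (h0 : G.diam ≠ 0) : ∃ b₁, G.Adj q b₁ ∧ G.dist p b₁ + 1 = G.diam := by
  have hc := hG.isConnected
  have hpq : p ≠ q := by
    intro hh; subst hh
    have hs : G.dist p p = 0 := SimpleGraph.dist_self
    omega
  obtain ⟨W, hW, hWl⟩ := hc.exists_path_of_dist p q
  have hnil : ¬ W.reverse.Nil := Walk.not_nil_of_ne (Ne.symm hpq)
  obtain ⟨b₁, hadj, W', hW'⟩ := Walk.not_nil_iff.mp hnil
  exact ⟨b₁, hadj, by rw [← h]; exact periph_nbr hG h hadj⟩

lemma induce_diam (hG : G.IsTree) {p q : V} (hq : G.dist p q = G.diam)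
    (h0 : G.diam ≠ 0) :
    (G.induce {v : V | G.dist p v < G.diam}).diam = G.diam - 1 := by
  have hc := hG.isConnected
  set S := {v : V | G.dist p v < G.diam} with hSdef
  have hp : p ∈ S := by
    have h1 : G.dist p p = 0 := by simp
    simp only [hSdef, Set.mem_setOf_eq, h1]
    exact Nat.pos_of_ne_zero h0
  have hconn := induce_connected hG p h0
  have : Nonempty S := ⟨⟨p, hp⟩⟩
  have hnetop : (G.induce S).ediam ≠ ⊤ := ediam_ne_top_of_connected hconn
  have hub : ∀ a b : S, (G.induce S).dist a b ≤ G.diam - 1 := by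
    rintro ⟨a, ha⟩ ⟨b, hb⟩
    rw [induce_dist_eq hG p ha hb]
    by_contra hab
    have hle := G.dist_le_diam (ediam_ne_top_of_connected hc) (u := a) (v := b)
    have hab' : G.dist a b = G.diam := by omega
    have h4 := four_point hG a b p q
    have c1 : G.dist a p = G.dist p a := G.dist_comm
    have c2 : G.dist b p = G.dist p b := G.dist_comm
    have ha' : G.dist p a < G.diam := ha
    have hb' : G.dist p b < G.diam := hb
    have l1 := G.dist_le_diam (ediam_ne_top_of_connected hc) (u := a) (v := q)
    have l2 := G.dist_le_diam (ediam_ne_top_of_connected hc) (u := b) (v := q)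
    rcases le_max_iff.mp h4 with hh | hh <;> omega
  obtain ⟨b₁, hadj, hb₁⟩ := exists_prenbr hG hq h0
  have hb₁S : b₁ ∈ S := by simp only [hSdef, Set.mem_setOf_eq]; omega
  refine le_antisymm ?_ ?_
  · obtain ⟨u, v, huv⟩ := (G.induce S).exists_dist_eq_diam
    rw [← huv]; exact hub u v
  · have := (G.induce S).dist_le_diam hnetop (u := ⟨p, hp⟩) (v := ⟨b₁, hb₁S⟩)
    rw [induce_dist_eq hG p hp hb₁S] at this
    omega

end Induced

end TreeLemmas

section BoxProd

variable {α β : Type*} {G : SimpleGraph α} {H : SimpleGraph β}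

lemma boxProd_walk_le (hG : G.Connected) (hH : H.Connected) {x y : α × β}
    (W : (G □ H).Walk x y) :
    G.dist x.1 y.1 + H.dist x.2 y.2 ≤ W.length := by
  induction W with
  | nil => simp
  | @cons a c d h W' ih =>
    rw [Walk.length_cons]
    rcases h with ⟨h1, h2⟩ | ⟨h1, h2⟩
    · have t := hG.dist_triangle (u := a.1) (v := c.1) (w := d.1)
      have : G.dist a.1 c.1 = 1 := SimpleGraph.dist_eq_one_iff_adj.mpr h1
      have h2' : H.dist a.2 d.2 = H.dist c.2 d.2 := by rw [h2]
      omega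
    · have t := hH.dist_triangle (u := a.2) (v := c.2) (w := d.2)
      have : H.dist a.2 c.2 = 1 := SimpleGraph.dist_eq_one_iff_adj.mpr h1
      have h2' : G.dist a.1 d.1 = G.dist c.1 d.1 := by rw [h2]
      omega

lemma boxProd_dist (hG : G.Connected) (hH : H.Connected) (x y : α × β) :
    (G □ H).dist x y = G.dist x.1 y.1 + H.dist x.2 y.2 := by
  refine le_antisymm ?_ ?_
  · obtain ⟨WG, hWG⟩ := (hG x.1 y.1).exists_walk_length_eq_dist
    obtain ⟨WH, hWH⟩ := (hH x.2 y.2).exists_walk_length_eq_dist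
    have hle := SimpleGraph.dist_le
      (((Walk.boxProdLeft H x.2 WG).append (Walk.boxProdRight G y.1 WH)).copy
        (Prod.mk.eta) (Prod.mk.eta))
    have e1 : (Walk.boxProdLeft H x.2 WG).length = WG.length := Walk.length_map _ _
    have e2 : (Walk.boxProdRight G y.1 WH).length = WH.length := Walk.length_map _ _
    rwa [Walk.length_copy, Walk.length_append, e1, e2, hWG, hWH] at hle
  · obtain ⟨W, hW⟩ := ((hG.boxProd hH) x y).exists_walk_length_eq_dist
    rw [← hW]
    exact boxProd_walk_le hG hH W

lemma boxProd_diam [Finite α] [Finite β] [Nonempty α] [Nonempty β]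
    (hG : G.Connected) (hH : H.Connected) :
    (G □ H).diam = G.diam + H.diam := by
  have hGH : (G □ H).Connected := hG.boxProd hH
  have hne : (G □ H).ediam ≠ ⊤ := ediam_ne_top_of_connected hGH
  have hneG : G.ediam ≠ ⊤ := ediam_ne_top_of_connected hG
  have hneH : H.ediam ≠ ⊤ := ediam_ne_top_of_connected hH
  refine le_antisymm ?_ ?_
  · obtain ⟨u, v, huv⟩ := (G □ H).exists_dist_eq_diam
    rw [← huv, boxProd_dist hG hH]
    exact Nat.add_le_add (G.dist_le_diam hneG) (H.dist_le_diam hneH)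
  · obtain ⟨a, b, hab⟩ := G.exists_dist_eq_diam
    obtain ⟨c, d, hcd⟩ := H.exists_dist_eq_diam
    have := (G □ H).dist_le_diam hne (u := (a, c)) (v := (b, d))
    rwa [boxProd_dist hG hH, hab, hcd] at this

end BoxProd

/-- A graph is 3-peripheral if it has three vertices pairwise at diameter distance. -/
def ThreePeripheral {V : Type*} (G : SimpleGraph V) : Prop :=
  ∃ a b c : V, a ≠ b ∧ a ≠ c ∧ b ≠ c ∧
    G.dist a b = G.diam ∧ G.dist a c = G.diam ∧ G.dist b c = G.diam

section CoreLemmas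

variable {V : Type*} {G : SimpleGraph V} [Finite V] [Nonempty V]

lemma red_red_dist (hG : G.IsTree) (hnp : ¬ ThreePeripheral G)
    {p q x y : V} (hpq : G.dist p q = G.diam) (h0 : G.diam ≠ 0)
    (hx : G.dist x q = G.diam) (hy : G.dist y p = G.diam) :
    G.dist x y = G.diam := by
  have hc := hG.isConnected
  have hne := ediam_ne_top_of_connected hc
  have hxq : x ≠ q := fun h => by rw [h, SimpleGraph.dist_self] at hx; omega
  have hyp : y ≠ p := fun h => by rw [h, SimpleGraph.dist_self] at hy; omega
  have hpq' : p ≠ q := fun h => by rw [h, SimpleGraph.dist_self] at hpq; omega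
  by_cases hxp : x = p
  · subst hxp; rwa [G.dist_comm] at hy
  by_cases hyq : y = q
  · subst hyq; exact hx
  have hxp' : G.dist x p ≤ G.diam - 1 := by
    have hle := G.dist_le_diam hne (u := x) (v := p)
    rcases Nat.lt_or_ge (G.dist x p) G.diam with h | h
    · omega
    · have h3 : ThreePeripheral G := ⟨x, p, q, hxp, hxq, hpq', by omega, hx, hpq⟩
      exact absurd h3 hnp
  have hyq' : G.dist y q ≤ G.diam - 1 := by
    have hle := G.dist_le_diam hne (u := y) (v := q)
    rcases Nat.lt_or_ge (G.dist y q) G.diam with h | h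
    · omega
    · have h3 : ThreePeripheral G :=
        ⟨y, q, p, hyq, hyp, Ne.symm hpq', by omega, hy, by rwa [G.dist_comm]⟩
      exact absurd h3 hnp
  have fp2 := four_point hG x q y p
  have hub := G.dist_le_diam hne (u := x) (v := y)
  have c1 : G.dist q p = G.dist p q := G.dist_comm
  have c2 : G.dist q y = G.dist y q := G.dist_comm
  rcases le_max_iff.mp fp2 with hh | hh <;> omega

lemma red_blue_dist_tree (hG : G.IsTree) (hnp : ¬ ThreePeripheral G)
    {p q x y : V}
    (hmin : ¬ ThreePeripheral (G.induce {v : V | G.dist p v < G.diam}))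
    (hpq : G.dist p q = G.diam) (h0 : G.diam ≠ 0)
    (hx : G.dist x q = G.diam) (hy : G.dist y p = G.diam - 1) :
    G.dist x y = G.diam - 1 := by
  have hc := hG.isConnected
  have hne := ediam_ne_top_of_connected hc
  have hxpe : G.dist p x % 2 = 0 := by
    have hp := dist_parity hG p q x
    have c1 : G.dist q x = G.dist x q := G.dist_comm
    omega
  have cxp : G.dist x p = G.dist p x := G.dist_comm
  rcases Nat.lt_or_ge G.diam 2 with hr1 | hr2
  · have hr1' : G.diam = 1 := by omega
    have hxp : G.dist p x = 0 := by
      have := G.dist_le_diam hne (u := p) (v := x)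
      omega
    have hx_eq : p = x := hc.dist_eq_zero_iff.mp hxp
    have hy_eq : y = p := hc.dist_eq_zero_iff.mp (by omega)
    rw [← hx_eq, hy_eq, SimpleGraph.dist_self]
    omega
  · have hxq : x ≠ q := fun h => by rw [h, SimpleGraph.dist_self] at hx; omega
    have hpq' : p ≠ q := fun h => by rw [h, SimpleGraph.dist_self] at hpq; omega
    have hxp' : G.dist x p ≤ G.diam - 1 := by
      by_cases hxp : x = p
      · rw [hxp, SimpleGraph.dist_self]; omega
      have hle := G.dist_le_diam hne (u := x) (v := p)
      rcases Nat.lt_or_ge (G.dist x p) G.diam with h | h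
      · omega
      · have h3 : ThreePeripheral G := ⟨x, p, q, hxp, hxq, hpq', by omega, hx, hpq⟩
        exact absurd h3 hnp
    have hyq'' : G.dist y q ≤ G.diam := G.dist_le_diam hne
    have fp1 := four_point hG x y p q
    have fp2 := four_point hG x q y p
    have c1 : G.dist q p = G.dist p q := G.dist_comm
    have c2 : G.dist q y = G.dist y q := G.dist_comm
    have c3 : G.dist y p = G.dist p y := G.dist_comm
    rcases Nat.lt_or_ge (G.dist x p + G.dist y q) (2 * G.diam - 1) with hS2 | hS2
    · rcases le_max_iff.mp fp1 with hh | hh <;> rcases le_max_iff.mp fp2 with hh' | hh' <;> omega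
    · exfalso
      have hxpr1 : G.dist x p = G.diam - 1 := by omega
      have hxpr2 : G.dist y q = G.diam := by omega
      have hrodd : G.diam % 2 = 1 := by omega
      obtain ⟨b₁, hb₁adj, hb₁d⟩ := exists_prenbr hG hpq h0
      have hxb₁ : G.dist x b₁ = G.diam - 1 := by
        have ht : G.dist x q ≤ G.dist x b₁ + G.dist b₁ q := hc.dist_triangle
        have hb₁q : G.dist b₁ q = 1 := SimpleGraph.dist_eq_one_iff_adj.mpr hb₁adj.symm
        have hub : G.dist x b₁ ≤ G.diam := G.dist_le_diam hne
        have hpar := dist_parity hG p x b₁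
        omega
      have hpS : p ∈ {v : V | G.dist p v < G.diam} := by
        simp only [Set.mem_setOf_eq, SimpleGraph.dist_self]; omega
      have hxS : x ∈ {v : V | G.dist p v < G.diam} := by
        simp only [Set.mem_setOf_eq]; omega
      have hbS : b₁ ∈ {v : V | G.dist p v < G.diam} := by
        simp only [Set.mem_setOf_eq]; omega
      refine hmin ⟨⟨p, hpS⟩, ⟨x, hxS⟩, ⟨b₁, hbS⟩, ?_, ?_, ?_, ?_, ?_, ?_⟩
      · intro h; have h' : p = x := congrArg Subtype.val h
        have hz : G.dist p x = 0 := by rw [h']; exact SimpleGraph.dist_self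
        omega
      · intro h; have h' : p = b₁ := congrArg Subtype.val h
        have hz : G.dist p b₁ = 0 := by rw [h']; exact SimpleGraph.dist_self
        omega
      · intro h; have h' : x = b₁ := congrArg Subtype.val h
        have hz : G.dist x b₁ = 0 := by rw [h']; exact SimpleGraph.dist_self
        omega
      · rw [induce_dist_eq hG p hpS hxS, induce_diam hG hpq h0]
        omega
      · rw [induce_dist_eq hG p hpS hbS, induce_diam hG hpq h0]
        omega
      · rw [induce_dist_eq hG p hxS hbS, induce_diam hG hpq h0]
        exact hxb₁

end CoreLemmas

/-- Under the hypotheses of the rainbow-free coloring lemma (nontrivial non-3-peripheral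
trees `T`, `T'` with `diam(T □ T')` even, `v₁₁ = (u₁,w₁)` and `v_{jk} = (u_j,w_k)` realizing
the diameter, and `T_{u₁⁻}`, `T'_{w₁⁻}` non-3-peripheral): if `x` is red (distance `diam`
from `v_{jk}`) and `y` is blue (distance `diam - 1` from `v₁₁`), then
`d(x,y) = diam(T □ T') - 1`. -/
theorem red_blue_dist {α β : Type*} [Fintype α] [Fintype β]
    (T : SimpleGraph α) (T' : SimpleGraph β) (hT : T.IsTree) (hT' : T'.IsTree)
    (hα : 2 ≤ Fintype.card α) (hβ : 2 ≤ Fintype.card β)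
    (hnp : ¬ ThreePeripheral T) (hnp' : ¬ ThreePeripheral T')
    (heven : Even ((T □ T').diam))
    (u₁ uj : α) (w₁ wk : β)
    (hdiam : (T □ T').dist (u₁, w₁) (uj, wk) = (T □ T').diam)
    (hmin : ¬ ThreePeripheral (T.induce {x : α | T.dist u₁ x < T.diam}))
    (hmin' : ¬ ThreePeripheral (T'.induce {x : β | T'.dist w₁ x < T'.diam})) :
    ∀ x y : α × β,
      (T □ T').dist x (uj, wk) = (T □ T').diam →
      (T □ T').dist y (u₁, w₁) = (T □ T').diam - 1 →
      (T □ T').dist x y = (T □ T').diam - 1 := by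
  intro x y hx hy
  have hTc := hT.isConnected
  have hT'c := hT'.isConnected
  have hαne : Nonempty α := Fintype.card_pos_iff.mp (by omega)
  have hβne : Nonempty β := Fintype.card_pos_iff.mp (by omega)
  have hαnt : Nontrivial α := Fintype.one_lt_card_iff_nontrivial.mp (by omega)
  have hβnt : Nontrivial β := Fintype.one_lt_card_iff_nontrivial.mp (by omega)
  have h0 : T.diam ≠ 0 := by
    obtain ⟨a, b, hab⟩ := exists_pair_ne α
    have h1 := hTc.pos_dist_of_ne hab
    have h2 := T.dist_le_diam (ediam_ne_top_of_connected hTc) (u := a) (v := b)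
    omega
  have h0' : T'.diam ≠ 0 := by
    obtain ⟨a, b, hab⟩ := exists_pair_ne β
    have h1 := hT'c.pos_dist_of_ne hab
    have h2 := T'.dist_le_diam (ediam_ne_top_of_connected hT'c) (u := a) (v := b)
    omega
  have hD : (T □ T').diam = T.diam + T'.diam := boxProd_diam hTc hT'c
  have hd : T.dist u₁ uj + T'.dist w₁ wk = T.diam + T'.diam := by
    have e : (T □ T').dist (u₁, w₁) (uj, wk) = T.dist u₁ uj + T'.dist w₁ wk :=
      boxProd_dist hTc hT'c _ _
    rw [e, hD] at hdiam
    exact hdiam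
  have hle1 := T.dist_le_diam (ediam_ne_top_of_connected hTc) (u := u₁) (v := uj)
  have hle2 := T'.dist_le_diam (ediam_ne_top_of_connected hT'c) (u := w₁) (v := wk)
  have hd1 : T.dist u₁ uj = T.diam := by omega
  have hd2 : T'.dist w₁ wk = T'.diam := by omega
  have hx' : T.dist x.1 uj + T'.dist x.2 wk = T.diam + T'.diam := by
    have e : (T □ T').dist x (uj, wk) = T.dist x.1 uj + T'.dist x.2 wk :=
      boxProd_dist hTc hT'c _ _
    rw [e, hD] at hx
    exact hx
  have hlex1 := T.dist_le_diam (ediam_ne_top_of_connected hTc) (u := x.1) (v := uj)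
  have hlex2 := T'.dist_le_diam (ediam_ne_top_of_connected hT'c) (u := x.2) (v := wk)
  have hx1 : T.dist x.1 uj = T.diam := by omega
  have hx2 : T'.dist x.2 wk = T'.diam := by omega
  have hy' : T.dist y.1 u₁ + T'.dist y.2 w₁ = T.diam + T'.diam - 1 := by
    have e : (T □ T').dist y (u₁, w₁) = T.dist y.1 u₁ + T'.dist y.2 w₁ :=
      boxProd_dist hTc hT'c _ _
    rw [e, hD] at hy
    exact hy
  have hley1 := T.dist_le_diam (ediam_ne_top_of_connected hTc) (u := y.1) (v := u₁)
  have hley2 := T'.dist_le_diam (ediam_ne_top_of_connected hT'c) (u := y.2) (v := w₁)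
  have egoal : (T □ T').dist x y = T.dist x.1 y.1 + T'.dist x.2 y.2 :=
    boxProd_dist hTc hT'c _ _
  rcases Nat.lt_or_ge (T.dist y.1 u₁) T.diam with hcase | hcase
  · -- T.dist y.1 u₁ = T.diam - 1, T'.dist y.2 w₁ = T'.diam
    have hy1 : T.dist y.1 u₁ = T.diam - 1 := by omega
    have hy2 : T'.dist y.2 w₁ = T'.diam := by omega
    have e1 : T.dist x.1 y.1 = T.diam - 1 :=
      red_blue_dist_tree hT hnp hmin hd1 h0 hx1 hy1
    have e2 : T'.dist x.2 y.2 = T'.diam :=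
      red_red_dist hT' hnp' hd2 h0' hx2 hy2
    rw [egoal, e1, e2, hD]
    omega
  · -- T.dist y.1 u₁ = T.diam, T'.dist y.2 w₁ = T'.diam - 1
    have hy1 : T.dist y.1 u₁ = T.diam := by omega
    have hy2 : T'.dist y.2 w₁ = T'.diam - 1 := by omega
    have e1 : T.dist x.1 y.1 = T.diam :=
      red_red_dist hT hnp hd1 h0 hx1 hy1
    have e2 : T'.dist x.2 y.2 = T'.diam - 1 :=
      red_blue_dist_tree hT' hnp' hmin' hd2 h0' hx2 hy2
    rw [egoal, e1, e2, hD]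
    omega
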